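/- arXiv:math/0609080 — 4 statements merged into one kernel-verified Lean document; each statement's English description precedes it below -/
import Mathlib

section
/- Let (A, φ) be a C*-probability space, D ⊆ A a unital C*-subalgebra such that φ restricted to D has faithful GNS representation, and ρ : A → D a conditional expectation with φ ∘ ρ = φ. Suppose (B_n)_{n≥1} are unital C*-subalgebras of A that form a free family with respect to φ, and D ⊆ B₁. For n ≥ 2, let A_n denote the *-algebra generated by B_n ∪ D. Then any alternating product of elements of B₁ ∩ ker ρ and elements of the spans D·Θ_n·D (where Θ_n consists of alternating words in B_n ∩ ker φ and D ∩ ker φ beginning and ending in B_n ∩ ker φ), with consecutive factors from algebras with distinct indices, lies in ker φ. -/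
/-- `IsAltWord S l`: `l` is a nonempty alternating word with letters `p.2 ∈ S p.1`
and consecutive letters from sets with distinct indices. -/
def IsAltWord {A : Type*} [Ring A] {ι : Type*} (S : ι → Set A)
    (l : List (ι × A)) : Prop :=
  l ≠ [] ∧ (∀ p ∈ l, p.2 ∈ S p.1) ∧ l.Chain' (fun p q => p.1 ≠ q.1)

/-- `AltBE X Y`: products of alternating words in `X` and `Y` beginning and
ending with a letter from `X`. -/
def AltBE {A : Type*} [Ring A] (X Y : Set A) : Set A :=
  {a | ∃ l : List (Bool × A), IsAltWord (fun b => if b then X else Y) l ∧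
    l.head?.map Prod.fst = some true ∧ l.getLast?.map Prod.fst = some true ∧
    a = (l.map Prod.snd).prod}

/-- The span of products of alternating words whose first letter has index
satisfying `P`. -/
def Wd {A : Type*} [Ring A] [Algebra ℂ A] {ι : Type*} (S : ι → Set A)
    (P : ι → Prop) : Submodule ℂ A :=
  Submodule.span ℂ {a | ∃ w : List (ι × A), IsAltWord S w ∧
    (∀ j : ι, w.head?.map Prod.fst = some j → P j) ∧ a = (w.map Prod.snd).prod}

theorem Wd_mono {A : Type*} [Ring A] [Algebra ℂ A] {ι : Type*} {S : ι → Set A}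
    {P P' : ι → Prop} (h : ∀ j, P j → P' j) : Wd S P ≤ Wd S P' := by
  apply Submodule.span_mono
  rintro a ⟨w, hw, hh, rfl⟩
  exact ⟨w, hw, fun j hj => h j (hh j hj), rfl⟩

theorem Wd_single {A : Type*} [Ring A] [Algebra ℂ A] {ι : Type*} {S : ι → Set A}
    {P : ι → Prop} {m : ι} (hm : P m) {x : A} (hx : x ∈ S m) : x ∈ Wd S P := by
  apply Submodule.subset_span
  refine ⟨[(m, x)], ⟨List.cons_ne_nil _ _, ?_, List.isChain_singleton _⟩, ?_, by simp⟩
  · intro p hp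
    rcases List.mem_cons.1 hp with rfl | hp
    · exact hx
    · exact absurd hp List.not_mem_nil
  · intro j hj
    simp only [List.head?_cons, Option.map_some, Option.some.injEq] at hj
    exact hj ▸ hm

theorem Wd_ker {A : Type*} [Ring A] [Algebra ℂ A] {ι : Type*} {S : ι → Set A}
    {φ : A →ₗ[ℂ] ℂ}
    (h : ∀ w : List (ι × A), IsAltWord S w → φ ((w.map Prod.snd).prod) = 0)
    (P : ι → Prop) : Wd S P ≤ LinearMap.ker φ := by
  rw [Wd, Submodule.span_le]
  rintro a ⟨w, hw, -, rfl⟩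
  simp only [SetLike.mem_coe, LinearMap.mem_ker]
  exact h w hw

theorem Wd_prep {A : Type*} [Ring A] [Algebra ℂ A] {ι : Type*} {S : ι → Set A}
    (m : ι) {x : A} (hx : x ∈ S m) {Q : ι → Prop} (hQ : ∀ j, Q j → j ≠ m)
    {v : A} {c : ℂ} (hv : v - c • 1 ∈ Wd S Q) :
    x * v ∈ Wd S (fun j => j = m) := by
  have key : ∀ w ∈ Wd S Q, x * w ∈ Wd S (fun j => j = m) := by
    intro w hw
    induction hw using Submodule.span_induction with
    | mem a ha =>
      obtain ⟨w, hw, hwh, rfl⟩ := ha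
      obtain ⟨hwne, hwmem, hwch⟩ := hw
      apply Submodule.subset_span
      refine ⟨(m, x) :: w, ⟨List.cons_ne_nil _ _, ?_, ?_⟩, ?_, by simp⟩
      · intro p hp
        rcases List.mem_cons.1 hp with rfl | hp
        · exact hx
        · exact hwmem p hp
      · refine List.isChain_cons.2 ⟨?_, hwch⟩
        intro q hq
        have hQq : Q q.1 := hwh q.1 (by rw [Option.mem_def] at hq; rw [hq]; rfl)
        exact (hQ q.1 hQq).symm
      · intro j hj
        simp only [List.head?_cons, Option.map_some, Option.some.injEq] at hj
        exact hj.symm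
    | zero => rw [mul_zero]; exact Submodule.zero_mem _
    | add a b _ _ iha ihb => rw [mul_add]; exact Submodule.add_mem _ iha ihb
    | smul r a _ iha => rw [mul_smul_comm]; exact Submodule.smul_mem _ _ iha
  have h1 := key _ hv
  have h2 : c • x ∈ Wd S (fun j => j = m) :=
    Submodule.smul_mem _ _ (Wd_single (P := fun j => j = m) rfl hx)
  have h3 : x * v = x * (v - c • 1) + c • x := by
    rw [mul_sub, mul_smul_comm, mul_one, sub_add_cancel]
  rw [h3]
  exact Submodule.add_mem _ h1 h2

theorem Wd_intr {A : Type*} [Ring A] [Algebra ℂ A] {ι : Type*} {S : ι → Set A}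
    {n₁ n₀ : ι} (hne : n₁ ≠ n₀) {Q : ι → Prop} (hQ : ∀ j, Q j → j ≠ n₁)
    {R : A} {c : ℂ} (hR : R - c • 1 ∈ Wd S Q) :
    ∀ u : List (Bool × A), u ≠ [] →
      (∀ p ∈ u, p.2 ∈ S (cond p.1 n₁ n₀)) →
      List.Chain' (fun p q => p.1 ≠ q.1) u →
      u.getLast?.map Prod.fst = some true →
      ∃ b : Bool, u.head?.map Prod.fst = some b ∧
        (u.map Prod.snd).prod * R ∈ Wd S (fun j => j = cond b n₁ n₀) := by
  intro u
  induction u with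
  | nil => intro h; exact absurd rfl h
  | cons p u' ihu =>
    obtain ⟨b, y⟩ := p
    intro _ hmem hch hlast
    have hy : y ∈ S (cond b n₁ n₀) := hmem (b, y) List.mem_cons_self
    refine ⟨b, by simp, ?_⟩
    cases u' with
    | nil =>
      have hb : b = true := by simpa using hlast
      subst hb
      simpa using Wd_prep n₁ (by simpa using hy) hQ hR
    | cons q u'' =>
      obtain ⟨b', hb', hmemw⟩ := ihu (List.cons_ne_nil _ _)
        (fun p hp => hmem p (List.mem_cons_of_mem _ hp))
        (List.isChain_cons_cons.1 hch).2
        (by rw [List.getLast?_cons_cons] at hlast; exact hlast)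
      have hbq : b ≠ q.1 := (List.isChain_cons_cons.1 hch).1
      have hb'q : q.1 = b' := by simpa using hb'
      have hbb : b' ≠ b := by rw [← hb'q]; exact Ne.symm hbq
      have hQ' : ∀ j, j = cond b' n₁ n₀ → j ≠ cond b n₁ n₀ := by
        rintro j rfl
        cases b <;> cases b' <;>
          simp only [Bool.cond_true, Bool.cond_false] <;>
          first
            | exact absurd rfl hbb
            | exact hne
            | exact hne.symm
      have hv : ((q :: u'').map Prod.snd).prod * R - (0 : ℂ) • 1 ∈
          Wd S (fun j => j = cond b' n₁ n₀) := by simpa using hmemw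
      have hfin := Wd_prep (cond b n₁ n₀) hy hQ' hv
      simpa only [List.map_cons, List.prod_cons, mul_assoc] using hfin

set_option maxHeartbeats 4000000 in
/-- Key step of the freeness-over-D lemma: with φ a state with φ∘ρ = φ, ρ a
conditional expectation onto D ⊆ B₁, φ|_D having faithful GNS representation, and
(B_n)_{n≥1} free with respect to φ, every alternating product of elements of
B₁ ∩ ker ρ and of the spans D·Θ_n·D (n ≥ 2), with consecutive factors of distinct
indices, lies in ker φ. Here Θ_n is the set of alternating words in B_n ∩ ker φ
and D ∩ ker φ beginning and ending in B_n ∩ ker φ. -/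
theorem stmt3 {A : Type*} [Ring A] [Algebra ℂ A] [StarRing A] [StarModule ℂ A]
    (φ : A →ₗ[ℂ] ℂ) (hφ1 : φ 1 = 1)
    (D : StarSubalgebra ℂ A)
    (hGNS : ∀ d ∈ D, (∀ d' ∈ D, ∀ d'' ∈ D, φ (d' * d * d'') = 0) → d = 0)
    (ρ : A →ₗ[ℂ] A)
    (hρD : ∀ a : A, ρ a ∈ D)
    (hρid : ∀ d ∈ D, ρ d = d)
    (hρbim : ∀ d ∈ D, ∀ d' ∈ D, ∀ a : A, ρ (d * a * d') = d * ρ a * d')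
    (hφρ : ∀ a : A, φ (ρ a) = φ a)
    (B : ℕ → StarSubalgebra ℂ A)
    (hDB1 : (D : Set A) ⊆ (B 1 : Set A))
    (hfree : ∀ l : List ({n : ℕ // 1 ≤ n} × A),
      IsAltWord (fun n => {a : A | a ∈ B n.1 ∧ φ a = 0}) l →
      φ ((l.map Prod.snd).prod) = 0) :
    ∀ l : List ({n : ℕ // 1 ≤ n} × A),
      IsAltWord (fun n =>
        if n.1 = 1 then (B 1 : Set A) ∩ {a : A | ρ a = 0}
        else (↑(Submodule.span ℂ {x : A | ∃ d₁ ∈ (D : Set A),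
            ∃ t ∈ AltBE ((B n.1 : Set A) ∩ {a : A | φ a = 0})
              ((D : Set A) ∩ {a : A | φ a = 0}),
            ∃ d₂ ∈ (D : Set A), x = d₁ * t * d₂}) : Set A)) l →
      φ ((l.map Prod.snd).prod) = 0 := by
  classical
  set o : {n : ℕ // 1 ≤ n} := ⟨1, le_refl 1⟩ with ho
  set S : {n : ℕ // 1 ≤ n} → Set A := fun n => {a : A | a ∈ B n.1 ∧ φ a = 0} with hS
  have hsmulB : ∀ c : ℂ, c • (1 : A) ∈ B 1 := by
    intro c
    rw [← Algebra.algebraMap_eq_smul_one]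
    exact StarSubalgebra.algebraMap_mem _ _
  have hφc : ∀ c : ℂ, φ (c • (1 : A)) = c := by
    intro c
    rw [map_smul, hφ1, smul_eq_mul, mul_one]
  have hDo : ∀ d : A, d ∈ D → d - φ d • 1 ∈ S o := by
    intro d hd
    rw [hS]
    exact ⟨sub_mem (hDB1 hd) (hsmulB _), by rw [map_sub, hφc, sub_self]⟩
  have hbase : ∀ d : A, d ∈ D → ∀ P : {n : ℕ // 1 ≤ n} → Prop, P o →
      d - φ d • 1 ∈ Wd S P := fun d hd P hP => Wd_single hP (hDo d hd)
  have main : ∀ N : ℕ, ∀ l : List ({n : ℕ // 1 ≤ n} × A), l.length ≤ N →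
      (∀ p ∈ l, p.2 ∈ (fun n : {n : ℕ // 1 ≤ n} =>
        if n.1 = 1 then (B 1 : Set A) ∩ {a : A | ρ a = 0}
        else (↑(Submodule.span ℂ {x : A | ∃ d₁ ∈ (D : Set A),
            ∃ t ∈ AltBE ((B n.1 : Set A) ∩ {a : A | φ a = 0})
              ((D : Set A) ∩ {a : A | φ a = 0}),
            ∃ d₂ ∈ (D : Set A), x = d₁ * t * d₂}) : Set A)) p.1) →
      List.Chain' (fun p q : {n : ℕ // 1 ≤ n} × A => p.1 ≠ q.1) l →
      ∀ d : A, d ∈ D →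
      ∃ c : ℂ, (d * (l.map Prod.snd).prod - c • 1 ∈
          Wd S (fun j => j = o ∨ l.head?.map Prod.fst = some j)) ∧
        (l ≠ [] → c = 0) := by
    intro N
    induction N with
    | zero =>
      intro l hlen _ _ d hd
      obtain rfl : l = [] := List.length_eq_zero_iff.1 (Nat.le_zero.1 hlen)
      refine ⟨φ d, ?_, fun h => absurd rfl h⟩
      simp only [List.map_nil, List.prod_nil, mul_one]
      exact hbase d hd _ (Or.inl rfl)
    | succ N ih =>
      intro l hlen hmem hch d hd
      cases l with
      | nil =>
        refine ⟨φ d, ?_, fun h => absurd rfl h⟩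
        simp only [List.map_nil, List.prod_nil, mul_one]
        exact hbase d hd _ (Or.inl rfl)
      | cons p l' =>
        obtain ⟨j, x⟩ := p
        have hx := hmem (j, x) List.mem_cons_self
        refine ⟨0, ?_, fun _ => rfl⟩
        rw [zero_smul, sub_zero]
        by_cases hj : j.1 = 1
        · -- head of type B₁ ∩ ker ρ
          have hx' : x ∈ (B 1 : Set A) ∩ {a : A | ρ a = 0} := by
            have hx2 : x ∈ (if j.1 = 1 then (B 1 : Set A) ∩ {a : A | ρ a = 0}
              else (↑(Submodule.span ℂ {x : A | ∃ d₁ ∈ (D : Set A),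
                ∃ t ∈ AltBE ((B j.1 : Set A) ∩ {a : A | φ a = 0})
                  ((D : Set A) ∩ {a : A | φ a = 0}),
                ∃ d₂ ∈ (D : Set A), x = d₁ * t * d₂}) : Set A)) := hx
            rwa [if_pos hj] at hx2
          obtain ⟨hx1, hxρ⟩ := hx'
          have hxρ' : ρ x = 0 := hxρ
          have hjo : j = o := Subtype.ext hj
          subst hjo
          cases l' with
          | nil =>
            have hdx : d * x ∈ S o := by
              rw [hS]
              refine ⟨mul_mem (hDB1 hd) hx1, ?_⟩
              have h1 := hρbim d hd 1 (one_mem _) x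
              rw [mul_one, mul_one] at h1
              rw [← hφρ (d * x), h1, hxρ', mul_zero, map_zero]
            simp only [List.map_cons, List.map_nil, List.prod_cons, List.prod_nil,
              mul_one]
            refine Wd_single ?_ hdx
            exact Or.inl rfl
          | cons p' l'' =>
            obtain ⟨n, ξ⟩ := p'
            have hon : o ≠ n := (List.isChain_cons_cons.1 hch).1
            have hn1 : n.1 ≠ 1 := fun h => hon (Subtype.ext h.symm)
            have hξ := hmem (n, ξ) (List.mem_cons_of_mem _ List.mem_cons_self)
            have hξ' : ξ ∈ Submodule.span ℂ {x : A | ∃ d₁ ∈ (D : Set A),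
                ∃ t ∈ AltBE ((B n.1 : Set A) ∩ {a : A | φ a = 0})
                  ((D : Set A) ∩ {a : A | φ a = 0}),
                ∃ d₂ ∈ (D : Set A), x = d₁ * t * d₂} := by
              have hξ2 : ξ ∈ (if n.1 = 1 then (B 1 : Set A) ∩ {a : A | ρ a = 0}
                else (↑(Submodule.span ℂ {x : A | ∃ d₁ ∈ (D : Set A),
                  ∃ t ∈ AltBE ((B n.1 : Set A) ∩ {a : A | φ a = 0})
                    ((D : Set A) ∩ {a : A | φ a = 0}),
                  ∃ d₂ ∈ (D : Set A), x = d₁ * t * d₂}) : Set A)) := hξ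
              rwa [if_neg hn1] at hξ2
            have hch2 := (List.isChain_cons_cons.1 hch).2
            have hhead'' := (List.isChain_cons.1 hch2).1
            have hch'' := (List.isChain_cons.1 hch2).2
            have hlen'' : l''.length ≤ N := by
              simp only [List.length_cons] at hlen; omega
            refine Wd_mono (fun j' h => Or.inl h) ?_
            simp only [List.map_cons, List.prod_cons]
            refine Submodule.span_induction
              (p := fun y _ => d * (x * (y * (l''.map Prod.snd).prod)) ∈
                Wd S (fun j' => j' = o)) ?_ ?_ ?_ ?_ hξ'
            · rintro a ⟨d₁, hd₁, t, ht, d₂, hd₂, rfl⟩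
              simp only [AltBE, Set.mem_setOf_eq] at ht
              obtain ⟨u, hu, huh, hul, rfl⟩ := ht
              obtain ⟨hune, humem, huch⟩ := hu
              obtain ⟨c, hc, -⟩ := ih l'' hlen''
                (fun p hp => hmem p (List.mem_cons_of_mem _ (List.mem_cons_of_mem _ hp)))
                hch'' d₂ hd₂
              have hQ : ∀ j', (j' = o ∨ l''.head?.map Prod.fst = some j') → j' ≠ n := by
                rintro j' (rfl | hh)
                · exact hon
                · rcases Option.map_eq_some_iff.1 hh with ⟨q, hq, rfl⟩
                  exact (hhead'' q (Option.mem_def.2 hq)).symm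
              have humem' : ∀ pp ∈ u, pp.2 ∈ S (cond pp.1 n o) := by
                intro pp hpp
                have h := humem pp hpp
                obtain ⟨b, y⟩ := pp
                cases b
                · have h' : y ∈ (D : Set A) ∩ {a : A | φ a = 0} := h
                  rw [hS]; exact ⟨hDB1 h'.1, h'.2⟩
                · have h' : y ∈ (B n.1 : Set A) ∩ {a : A | φ a = 0} := h
                  rw [hS]; exact h'
              obtain ⟨b, hb, hmemw⟩ := Wd_intr (Ne.symm hon) hQ hc u hune humem' huch hul
              have hbt : b = true := by
                rw [huh] at hb; exact (Option.some.inj hb).symm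
              subst hbt
              have hmemw' : (u.map Prod.snd).prod * (d₂ * (l''.map Prod.snd).prod) ∈
                  Wd S (fun j' => j' = n) := hmemw
              have hz : d * (x * d₁) ∈ S o := by
                rw [hS]
                refine ⟨mul_mem (hDB1 hd) (mul_mem hx1 (hDB1 hd₁)), ?_⟩
                have h1 := hρbim d hd d₁ hd₁ x
                rw [← hφρ (d * (x * d₁)),
                  show d * (x * d₁) = d * x * d₁ from (mul_assoc d x d₁).symm,
                  h1, hxρ', mul_zero, zero_mul, map_zero]
              have hQo : ∀ j', j' = n → j' ≠ o := by rintro j' rfl; exact Ne.symm hon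
              have hv : (u.map Prod.snd).prod * (d₂ * (l''.map Prod.snd).prod)
                  - (0 : ℂ) • 1 ∈ Wd S (fun j' => j' = n) := by simpa using hmemw'
              have hfin := Wd_prep o hz hQo hv
              simpa only [mul_assoc] using hfin
            · simp only [zero_mul, mul_zero]
              exact Submodule.zero_mem _
            · intro y z _ _ ihy ihz
              simp only [add_mul, mul_add]
              exact Submodule.add_mem _ ihy ihz
            · intro r y _ ihy
              simp only [smul_mul_assoc, mul_smul_comm]
              exact Submodule.smul_mem _ _ ihy
        · -- head of type D·Θ_j·D
          have hx' : x ∈ Submodule.span ℂ {xx : A | ∃ d₁ ∈ (D : Set A),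
              ∃ t ∈ AltBE ((B j.1 : Set A) ∩ {a : A | φ a = 0})
                ((D : Set A) ∩ {a : A | φ a = 0}),
              ∃ d₂ ∈ (D : Set A), xx = d₁ * t * d₂} := by
            have hx2 : x ∈ (if j.1 = 1 then (B 1 : Set A) ∩ {a : A | ρ a = 0}
              else (↑(Submodule.span ℂ {x : A | ∃ d₁ ∈ (D : Set A),
                ∃ t ∈ AltBE ((B j.1 : Set A) ∩ {a : A | φ a = 0})
                  ((D : Set A) ∩ {a : A | φ a = 0}),
                ∃ d₂ ∈ (D : Set A), x = d₁ * t * d₂}) : Set A)) := hx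
            rwa [if_neg hj] at hx2
          have hoj : o ≠ j := fun h => hj (by rw [← h])
          have hjo' : j ≠ o := Ne.symm hoj
          have hhead' := (List.isChain_cons.1 hch).1
          have hch' := (List.isChain_cons.1 hch).2
          have hlen' : l'.length ≤ N := by simp only [List.length_cons] at hlen; omega
          simp only [List.map_cons, List.prod_cons]
          refine Submodule.span_induction
            (p := fun y _ => d * (y * (l'.map Prod.snd).prod) ∈
              Wd S (fun j' => j' = o ∨
                ((j, x) :: l').head?.map Prod.fst = some j')) ?_ ?_ ?_ ?_ hx'
          · rintro a ⟨d₁, hd₁, t, ht, d₂, hd₂, rfl⟩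
            simp only [AltBE, Set.mem_setOf_eq] at ht
            obtain ⟨u, hu, huh, hul, rfl⟩ := ht
            obtain ⟨hune, humem, huch⟩ := hu
            obtain ⟨c, hc, -⟩ := ih l' hlen'
              (fun p hp => hmem p (List.mem_cons_of_mem _ hp)) hch' d₂ hd₂
            have hQ : ∀ j', (j' = o ∨ l'.head?.map Prod.fst = some j') → j' ≠ j := by
              rintro j' (rfl | hh)
              · exact hoj
              · rcases Option.map_eq_some_iff.1 hh with ⟨q, hq, rfl⟩
                exact (hhead' q (Option.mem_def.2 hq)).symm
            have humem' : ∀ pp ∈ u, pp.2 ∈ S (cond pp.1 j o) := by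
              intro pp hpp
              have h := humem pp hpp
              obtain ⟨b, y⟩ := pp
              cases b
              · have h' : y ∈ (D : Set A) ∩ {a : A | φ a = 0} := h
                rw [hS]; exact ⟨hDB1 h'.1, h'.2⟩
              · have h' : y ∈ (B j.1 : Set A) ∩ {a : A | φ a = 0} := h
                rw [hS]; exact h'
            obtain ⟨b, hb, hmemw⟩ := Wd_intr hjo' hQ hc u hune humem' huch hul
            have hbt : b = true := by
              rw [huh] at hb; exact (Option.some.inj hb).symm
            subst hbt
            have hmemw' : (u.map Prod.snd).prod * (d₂ * (l'.map Prod.snd).prod) ∈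
                Wd S (fun j' => j' = j) := hmemw
            have hdd₁ : d * d₁ ∈ D := mul_mem hd hd₁
            have hz := hDo _ hdd₁
            have hQo : ∀ j', j' = j → j' ≠ o := by rintro j' rfl; exact hjo'
            have hv : (u.map Prod.snd).prod * (d₂ * (l'.map Prod.snd).prod)
                - (0 : ℂ) • 1 ∈ Wd S (fun j' => j' = j) := by simpa using hmemw'
            have part1 := Wd_prep o hz hQo hv
            have part1' : (d * d₁ - φ (d * d₁) • 1) *
                ((u.map Prod.snd).prod * (d₂ * (l'.map Prod.snd).prod)) ∈
                Wd S (fun j' => j' = o ∨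
                  ((j, x) :: l').head?.map Prod.fst = some j') :=
              Wd_mono (fun j' (h : j' = o) => Or.inl h) part1
            have part2 : φ (d * d₁) •
                ((u.map Prod.snd).prod * (d₂ * (l'.map Prod.snd).prod)) ∈
                Wd S (fun j' => j' = o ∨
                  ((j, x) :: l').head?.map Prod.fst = some j') :=
              Submodule.smul_mem _ _
                (Wd_mono (fun j' (h : j' = j) => Or.inr (by rw [h]; rfl)) hmemw')
            have key : d * (d₁ * (u.map Prod.snd).prod * d₂ * (l'.map Prod.snd).prod) =
                (d * d₁ - φ (d * d₁) • 1) *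
                  ((u.map Prod.snd).prod * (d₂ * (l'.map Prod.snd).prod))
                + φ (d * d₁) •
                  ((u.map Prod.snd).prod * (d₂ * (l'.map Prod.snd).prod)) := by
              rw [sub_mul, smul_mul_assoc, one_mul, sub_add_cancel]
              simp only [mul_assoc]
            show d * (d₁ * (u.map Prod.snd).prod * d₂ * (l'.map Prod.snd).prod) ∈
              Wd S (fun j' => j' = o ∨ ((j, x) :: l').head?.map Prod.fst = some j')
            rw [key]
            exact Submodule.add_mem _ part1' part2
          · simp only [zero_mul, mul_zero]
            exact Submodule.zero_mem _
          · intro y z _ _ ihy ihz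
            simp only [add_mul, mul_add]
            exact Submodule.add_mem _ ihy ihz
          · intro r y _ ihy
            simp only [smul_mul_assoc, mul_smul_comm]
            exact Submodule.smul_mem _ _ ihy
  intro l hl
  obtain ⟨c, hc, hc0⟩ := main l.length l le_rfl hl.2.1 hl.2.2 1 (one_mem _)
  rw [hc0 hl.1, zero_smul, sub_zero, one_mul] at hc
  exact LinearMap.mem_ker.1 (Wd_ker (fun w hw => hfree w hw) _ hc)
end

section
/- In the setting of the previous freeness lemma, the family of *-algebras (A_n)_{n≥1}, where A_n is generated by B_n ∪ D, is free over D with respect to the conditional expectation ρ; i.e., any alternating product of elements from A_{i_1} ∩ ker ρ, ..., A_{i_q} ∩ ker ρ with consecutive indices distinct lies in ker ρ. -/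
set_option maxHeartbeats 1000000

namespace Stmt4Aux
set_option linter.unusedSectionVars false

abbrev I1 : Type := {n : ℕ // 1 ≤ n}

def o : I1 := ⟨1, le_rfl⟩

variable {A : Type*} [Ring A] [Algebra ℂ A] [StarRing A] [StarModule ℂ A]

variable (φ : A →ₗ[ℂ] ℂ) (D : StarSubalgebra ℂ A) (B : ℕ → StarSubalgebra ℂ A)

def NW (i : I1) (w : List (I1 × A)) : Prop :=
  (∀ p ∈ w, (p.1 = i ∧ p.2 ∈ B i.1 ∧ φ p.2 = 0) ∨ (p.1 = o ∧ p.2 ∈ D ∧ φ p.2 = 0)) ∧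
    w.Chain' (fun p q => p.1 ≠ q.1)

def Interior (i : I1) (w : List (I1 × A)) : Prop :=
  NW φ D B i w ∧ w ≠ [] ∧ (∀ p, w.head? = some p → p.1 = i) ∧
    (∀ p, w.getLast? = some p → p.1 = i)

def Wset (i : I1) : Set A :=
  {a | ∃ d ∈ (D : Set A), ∃ e ∈ (D : Set A), ∃ w, Interior φ D B i w ∧
    a = d * (((w.map Prod.snd).prod) * e)}

def Smod (i : I1) : Submodule ℂ A :=
  Subalgebra.toSubmodule D.toSubalgebra ⊔ Submodule.span ℂ (Wset φ D B i)

lemma memSmodD {i : I1} {x : A} (hx : x ∈ D) : x ∈ Smod φ D B i :=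
  Submodule.mem_sup_left (by simpa [Subalgebra.mem_toSubmodule, StarSubalgebra.mem_toSubalgebra] using hx)

lemma memSmodW {i : I1} {x : A} (hx : x ∈ Wset φ D B i) : x ∈ Smod φ D B i :=
  Submodule.mem_sup_right (Submodule.subset_span hx)

lemma cent0 (hφ1 : φ 1 = 1) (c : A) : φ (c - φ c • 1) = 0 := by
  simp [map_sub, map_smul, hφ1]

lemma centD {c : A} (hc : c ∈ D) : c - φ c • 1 ∈ D :=
  sub_mem hc (SMulMemClass.smul_mem _ (one_mem _))

lemma centB {n : ℕ} {c : A} (hc : c ∈ B n) : c - φ c • 1 ∈ B n :=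
  sub_mem hc (SMulMemClass.smul_mem _ (one_mem _))

lemma mulR (x c : A) : x * c = x * (c - φ c • 1) + φ c • x := by
  rw [mul_sub, mul_smul_comm, mul_one, sub_add_cancel]

lemma mulL (c x : A) : c * x = (c - φ c • 1) * x + φ c • x := by
  rw [sub_mul, smul_mul_assoc, one_mul, sub_add_cancel]

lemma nwLetters (hDB1 : (D : Set A) ⊆ (B 1 : Set A)) {i : I1} {w : List (I1 × A)}
    (h : NW φ D B i w) : ∀ p ∈ w, p.2 ∈ B p.1.1 ∧ φ p.2 = 0 := by
  intro p hp
  rcases h.1 p hp with ⟨h1, h2, h3⟩ | ⟨h1, h2, h3⟩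
  · rw [h1]; exact ⟨h2, h3⟩
  · rw [h1]; exact ⟨hDB1 h2, h3⟩

lemma nwCases {i : I1} {w : List (I1 × A)} (h : NW φ D B i w) {p : I1 × A} (hp : p ∈ w) :
    p.1 = i ∨ p.1 = o := by
  rcases h.1 p hp with ⟨h1, _⟩ | ⟨h1, _⟩ <;> [exact Or.inl h1; exact Or.inr h1]

lemma nwD {i : I1} (hi : i ≠ o) {w : List (I1 × A)} (h : NW φ D B i w) {p : I1 × A}
    (hp : p ∈ w) (h1 : p.1 = o) : p.2 ∈ D ∧ φ p.2 = 0 := by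
  rcases h.1 p hp with ⟨h2, _⟩ | ⟨_, h2, h3⟩
  · exact absurd (h2.symm.trans h1) hi
  · exact ⟨h2, h3⟩

lemma nwB {i : I1} (hi : i ≠ o) {w : List (I1 × A)} (h : NW φ D B i w) {p : I1 × A}
    (hp : p ∈ w) (h1 : p.1 = i) : p.2 ∈ B i.1 ∧ φ p.2 = 0 := by
  rcases h.1 p hp with ⟨_, h2, h3⟩ | ⟨h2, _⟩
  · exact ⟨h2, h3⟩
  · exact absurd (h2.symm.trans h1).symm hi

lemma altphi (hfree : ∀ l : List (I1 × A),
      IsAltWord (fun n => {a : A | a ∈ B n.1 ∧ φ a = 0}) l →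
      φ ((l.map Prod.snd).prod) = 0)
    (w : List (I1 × A)) (h1 : w ≠ []) (h2 : ∀ p ∈ w, p.2 ∈ B p.1.1 ∧ φ p.2 = 0)
    (h3 : w.Chain' (fun p q => p.1 ≠ q.1)) : φ ((w.map Prod.snd).prod) = 0 :=
  hfree w ⟨h1, h2, h3⟩

lemma flank (hφ1 : φ 1 = 1) (hDB1 : (D : Set A) ⊆ (B 1 : Set A))
    (hfree : ∀ l : List (I1 × A),
      IsAltWord (fun n => {a : A | a ∈ B n.1 ∧ φ a = 0}) l →
      φ ((l.map Prod.snd).prod) = 0)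
    {i : I1} (hi : i ≠ o) {w : List (I1 × A)} (hw : Interior φ D B i w)
    {d e : A} (hd : d ∈ D) (he : e ∈ D) :
    φ (d * ((w.map Prod.snd).prod * e)) = 0 := by
  obtain ⟨hnw, hne, hhead, hlast⟩ := hw
  have hlet : ∀ p ∈ w, p.2 ∈ B p.1.1 ∧ φ p.2 = 0 := nwLetters φ D B hDB1 hnw
  have hd1 : d - φ d • 1 ∈ (B 1 : StarSubalgebra ℂ A) := centB φ B (hDB1 hd)
  have he1 : e - φ e • 1 ∈ (B 1 : StarSubalgebra ℂ A) := centB φ B (hDB1 he)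
  have hlet' : ∀ p ∈ w ++ [(o, e - φ e • 1)], p.2 ∈ B p.1.1 ∧ φ p.2 = 0 := by
    intro p hp
    rcases List.mem_append.1 hp with hp | hp
    · exact hlet p hp
    · rcases List.mem_singleton.1 hp with rfl
      exact ⟨he1, cent0 φ hφ1 e⟩
  have hch' : (w ++ [(o, e - φ e • 1)]).Chain' (fun p q => p.1 ≠ q.1) := by
    refine hnw.2.append (List.isChain_singleton _) ?_
    intro x hx y hy
    rw [Option.mem_def] at hx hy
    rw [hlast x hx]
    simp only [List.head?_cons, Option.some.injEq] at hy
    rw [← hy]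
    exact hi
  have h4 : φ ((w.map Prod.snd).prod) = 0 := altphi φ B hfree w hne hlet hnw.2
  have h3 : φ ((w.map Prod.snd).prod * (e - φ e • 1)) = 0 := by
    have := altphi φ B hfree (w ++ [(o, e - φ e • 1)]) (by simp) hlet' hch'
    simpa [List.map_append, List.prod_append] using this
  have hchc : ∀ (u : List (I1 × A)), u.Chain' (fun p q => p.1 ≠ q.1) →
      (∀ p, u.head? = some p → p.1 = i) → u ≠ [] →
      ((o, d - φ d • 1) :: u).Chain' (fun p q => p.1 ≠ q.1) := by
    intro u hu hh hun
    refine List.isChain_cons.2 ⟨?_, hu⟩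
    intro y hy
    rw [Option.mem_def] at hy
    have := hh y hy
    simp only [ne_eq]
    rw [this]
    exact fun h => hi h.symm
  have h2 : φ ((d - φ d • 1) * (w.map Prod.snd).prod) = 0 := by
    have := altphi φ B hfree ((o, d - φ d • 1) :: w)
      (by simp)
      (by
        intro p hp
        rcases List.mem_cons.1 hp with rfl | hp
        · exact ⟨hd1, cent0 φ hφ1 d⟩
        · exact hlet p hp)
      (hchc w hnw.2 hhead hne)
    simpa using this
  have h1 : φ ((d - φ d • 1) * ((w.map Prod.snd).prod * (e - φ e • 1))) = 0 := by
    have := altphi φ B hfree ((o, d - φ d • 1) :: (w ++ [(o, e - φ e • 1)]))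
      (by simp)
      (by
        intro p hp
        rcases List.mem_cons.1 hp with rfl | hp
        · exact ⟨hd1, cent0 φ hφ1 d⟩
        · exact hlet' p hp)
      (by
        refine hchc _ hch' ?_ (by simp)
        intro p hp
        rcases w with _ | ⟨r, t⟩
        · exact absurd rfl hne
        · simp only [List.cons_append, List.head?_cons, Option.some.injEq] at hp
          exact hp ▸ hhead r rfl)
    simpa [List.map_append, List.prod_append, mul_assoc] using this
  rw [mulR φ ((w.map Prod.snd).prod) e, mul_add, map_add, mul_smul_comm, map_smul,
    mulL φ d ((w.map Prod.snd).prod * (e - φ e • 1)), mulL φ d ((w.map Prod.snd).prod),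
    map_add, map_add, map_smul, map_smul, h1, h2, h3, h4]
  simp

lemma claimL :
    ∀ (N : ℕ) {i : I1} (_ : i ≠ o) (l : List (I1 × A)), l.length ≤ N → NW φ D B i l →
    ∀ {d e : A}, d ∈ D → e ∈ D →
      d * ((l.map Prod.snd).prod * e) ∈ Smod φ D B i := by
  intro N
  induction N with
  | zero =>
    intro i hi l hlen hl d e hd he
    have : l = [] := List.eq_nil_of_length_eq_zero (Nat.le_zero.mp hlen)
    subst this
    simpa using memSmodD φ D B (mul_mem hd he)
  | succ N IH =>
    intro i hi l hlen hl d e hd he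
    rcases l with _ | ⟨p, t⟩
    · simpa using memSmodD φ D B (mul_mem hd he)
    rcases nwCases φ D B hl (List.mem_cons_self (a := p) (l := t)) with hp | hp
    · -- p.1 = i : look at the last letter
      rcases List.eq_nil_or_concat (p :: t) with h | ⟨m, q, hmq⟩
      · simp at h
      rw [List.concat_eq_append] at hmq
      rcases nwCases φ D B hl (by rw [hmq]; exact List.mem_append_right _ (List.mem_singleton_self q)) with hq | hq
      · -- both ends i : interior word
        refine memSmodW φ D B ⟨d, hd, e, he, p :: t, ⟨hl, by simp, ?_, ?_⟩, rfl⟩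
        · intro r hr
          simp only [List.head?_cons, Option.some.injEq] at hr
          rw [← hr]; exact hp
        · intro r hr
          rw [hmq, List.getLast?_concat] at hr
          rcases Option.some.injEq .. ▸ hr with rfl
          exact hq
      · -- last letter has index o : absorb on the right
        have hq2 : q.2 ∈ D := (nwD φ D B hi hl
          (by rw [hmq]; exact List.mem_append_right _ (List.mem_singleton_self q)) hq).1
        have hm : NW φ D B i m := by
          constructor
          · intro r hr
            exact hl.1 r (by rw [hmq]; exact List.mem_append_left _ hr)
          · have := hl.2
            rw [hmq] at this
            exact this.left_of_append
        have hlm : m.length ≤ N := by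
          have : (p :: t).length = m.length + 1 := by rw [hmq]; simp
          omega
        have := IH hi m hlm hm hd (mul_mem hq2 he)
        rw [hmq]
        simpa [List.map_append, List.prod_append, mul_assoc] using this
    · -- head has index o : absorb on the left
      have hp2 : p.2 ∈ D := (nwD φ D B hi hl (List.mem_cons_self (a := p) (l := t)) hp).1
      have ht : NW φ D B i t := ⟨fun r hr => hl.1 r (List.mem_cons_of_mem _ hr), hl.2.tail⟩
      have := IH hi t (by simpa using hlen) ht (mul_mem hd hp2) he
      simpa [mul_assoc] using this

lemma mulw (hφ1 : φ 1 = 1) :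
    ∀ (N : ℕ) {i : I1} (_ : i ≠ o) (l₁ l₂ : List (I1 × A)),
      l₁.length + l₂.length ≤ N → NW φ D B i l₁ → NW φ D B i l₂ →
      ∀ {g d e : A}, g ∈ D → d ∈ D → e ∈ D →
        d * ((l₁.map Prod.snd).prod * (g * ((l₂.map Prod.snd).prod * e))) ∈ Smod φ D B i := by
  intro N
  induction N with
  | zero =>
    intro i hi l₁ l₂ hlen h₁ h₂ g d e hg hd he
    have e1 : l₁ = [] := List.eq_nil_of_length_eq_zero (by omega)
    have e2 : l₂ = [] := List.eq_nil_of_length_eq_zero (by omega)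
    subst e1; subst e2
    simpa using memSmodD φ D B (mul_mem hd (mul_mem hg he))
  | succ N IH =>
    intro i hi l₁ l₂ hlen h₁ h₂ g d e hg hd he
    rcases l₁ with _ | ⟨p₀, t₁⟩
    · have := claimL φ D B l₂.length hi l₂ le_rfl h₂ (mul_mem hd hg) he
      simpa [mul_assoc] using this
    rcases l₂ with _ | ⟨q, t⟩
    · have := claimL φ D B (p₀ :: t₁).length hi (p₀ :: t₁) le_rfl h₁ hd (mul_mem hg he)
      simpa [mul_assoc] using this
    -- decompose l₁ from the right
    rcases List.eq_nil_or_concat (p₀ :: t₁) with h | ⟨m, p, hmq⟩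
    · simp at h
    rw [List.concat_eq_append] at hmq
    have hpmem : p ∈ p₀ :: t₁ := by
      rw [hmq]; exact List.mem_append_right _ (List.mem_singleton_self p)
    have hqmem : q ∈ q :: t := List.mem_cons_self (a := q) (l := t)
    have hm : NW φ D B i m := by
      refine ⟨fun r hr => h₁.1 r (by rw [hmq]; exact List.mem_append_left _ hr), ?_⟩
      have := h₁.2; rw [hmq] at this; exact this.left_of_append
    have ht : NW φ D B i t := ⟨fun r hr => h₂.1 r (List.mem_cons_of_mem _ hr), h₂.2.tail⟩
    have hlenm : (p₀ :: t₁).length = m.length + 1 := by rw [hmq]; simp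
    rcases nwCases φ D B h₁ hpmem with hp | hp
    · rcases nwCases φ D B h₂ hqmem with hq | hq
      · -- both boundary letters have index i : split the middle g and then merge
        have hpB : p.2 ∈ B i.1 := (nwB φ D B hi h₁ hpmem hp).1
        have hqB : q.2 ∈ B i.1 := (nwB φ D B hi h₂ hqmem hq).1
        rw [hmq]
        simp only [List.map_append, List.map_cons, List.map_nil, List.prod_append,
          List.prod_cons, List.prod_nil, mul_one, one_mul, mul_assoc]
        -- goal : d * (Pm * (p.2 * (g * (q.2 * (Pt * e))))) ∈ Smod
        rw [mulL φ g (q.2 * ((t.map Prod.snd).prod * e))]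
        simp only [mul_add, mul_smul_comm]
        refine Submodule.add_mem _ ?_ (Submodule.smul_mem _ _ ?_)
        · -- word  m ++ p :: (o,g°) :: q :: t
          have hw : NW φ D B i (m ++ p :: (o, g - φ g • 1) :: q :: t) := by
            constructor
            · intro r hr
              rcases List.mem_append.1 hr with hr | hr
              · exact hm.1 r hr
              rcases List.mem_cons.1 hr with rfl | hr
              · exact h₁.1 r hpmem
              rcases List.mem_cons.1 hr with rfl | hr
              · exact Or.inr ⟨rfl, centD φ D hg, cent0 φ hφ1 g⟩
              · exact h₂.1 r hr
            · refine List.IsChain.append ?_ ?_ ?_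
              · exact hm.2
              · refine List.isChain_cons.2 ⟨?_, List.isChain_cons.2 ⟨?_, h₂.2⟩⟩
                · intro y hy
                  simp only [List.head?_cons, Option.mem_def, Option.some.injEq] at hy
                  rw [← hy, hp]; exact hi
                · intro y hy
                  simp only [List.head?_cons, Option.mem_def, Option.some.injEq] at hy
                  rw [← hy, hq]; exact fun hcon => hi hcon.symm
              · intro x hx y hy
                simp only [List.head?_cons, Option.mem_def, Option.some.injEq] at hy
                have := h₁.2; rw [hmq] at this
                have hb := (List.isChain_append.1 this).2.2 x hx p (by simp)
                rw [← hy]; exact hb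
          have := claimL φ D B (m ++ p :: (o, g - φ g • 1) :: q :: t).length hi _ le_rfl hw hd he
          simpa [List.map_append, List.prod_append, mul_assoc] using this
        · -- merged term : d * (Pm * (p.2 * (q.2 * (Pt * e))))
          rw [show p.2 * (q.2 * ((t.map Prod.snd).prod * e))
              = (p.2 * q.2) * ((t.map Prod.snd).prod * e) by rw [mul_assoc]]
          rw [mulL φ (p.2 * q.2) ((t.map Prod.snd).prod * e)]
          simp only [mul_add, mul_smul_comm]
          refine Submodule.add_mem _ ?_ (Submodule.smul_mem _ _ ?_)
          · -- word  m ++ (i, (p.2*q.2)°) :: t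
            have hw : NW φ D B i (m ++ (i, p.2 * q.2 - φ (p.2 * q.2) • 1) :: t) := by
              constructor
              · intro r hr
                rcases List.mem_append.1 hr with hr | hr
                · exact hm.1 r hr
                rcases List.mem_cons.1 hr with rfl | hr
                · exact Or.inl ⟨rfl, centB φ B (mul_mem hpB hqB), cent0 φ hφ1 _⟩
                · exact ht.1 r hr
              · refine List.IsChain.append hm.2 (List.isChain_cons.2 ⟨?_, h₂.2.tail⟩) ?_
                · intro y hy
                  have := List.isChain_cons.1 h₂.2
                  have h5 := this.1 y hy
                  rw [hq] at h5; exact h5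
                · intro x hx y hy
                  simp only [List.head?_cons, Option.mem_def, Option.some.injEq] at hy
                  have := h₁.2; rw [hmq] at this
                  have hb := (List.isChain_append.1 this).2.2 x hx p (by simp)
                  rw [← hy]
                  simpa [hp] using hb
            have := claimL φ D B (m ++ (i, p.2 * q.2 - φ (p.2 * q.2) • 1) :: t).length hi _ le_rfl hw hd he
            simpa [List.map_append, List.prod_append, mul_assoc] using this
          · -- recurse : d * (Pm * (1 * (Pt * e)))
            have := IH hi m t (by simp at hlen hlenm; omega) hm ht (one_mem D) hd he
            simpa [mul_assoc] using this
      · -- q has index o : absorb into g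
        have hqD : q.2 ∈ D := (nwD φ D B hi h₂ hqmem hq).1
        have := IH hi (p₀ :: t₁) t (by simp at hlen ⊢; omega) h₁ ht (mul_mem hg hqD) hd he
        simpa [mul_assoc] using this
    · -- p has index o : absorb into g
      have hpD : p.2 ∈ D := (nwD φ D B hi h₁ hpmem hp).1
      have := IH hi m (q :: t) (by simp at hlen hlenm ⊢; omega) hm h₂ (mul_mem hpD hg) hd he
      rw [hmq]
      simpa [List.map_append, List.prod_append, mul_assoc] using this

lemma smodMul (hφ1 : φ 1 = 1) {i : I1} (hi : i ≠ o) {x y : A}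
    (hx : x ∈ Smod φ D B i) (hy : y ∈ Smod φ D B i) : x * y ∈ Smod φ D B i := by
  rcases Submodule.mem_sup.1 hx with ⟨x₁, hx₁, x₂, hx₂, rfl⟩
  rcases Submodule.mem_sup.1 hy with ⟨y₁, hy₁, y₂, hy₂, rfl⟩
  rw [Subalgebra.mem_toSubmodule, StarSubalgebra.mem_toSubalgebra] at hx₁ hy₁
  clear hx hy
  rw [add_mul, mul_add, mul_add]
  refine Submodule.add_mem _ (Submodule.add_mem _ (memSmodD φ D B (mul_mem hx₁ hy₁)) ?_) ?_
  · -- x₁ * y₂ with x₁ ∈ D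
    induction hy₂ using Submodule.span_induction with
    | mem a ha =>
      obtain ⟨d, hd, e, he, w, hw, rfl⟩ := ha
      refine memSmodW φ D B ⟨x₁ * d, mul_mem hx₁ hd, e, he, w, hw, ?_⟩
      rw [mul_assoc]
    | zero => simpa using Submodule.zero_mem _
    | add a b _ _ iha ihb => rw [mul_add]; exact Submodule.add_mem _ iha ihb
    | smul c a _ ih => rw [mul_smul_comm]; exact Submodule.smul_mem _ _ ih
  · -- x₂ * (y₁ + y₂)
    refine Submodule.add_mem _ ?_ ?_
    · -- x₂ * y₁ with y₁ ∈ D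
      induction hx₂ using Submodule.span_induction with
      | mem a ha =>
        obtain ⟨d, hd, e, he, w, hw, rfl⟩ := ha
        refine memSmodW φ D B ⟨d, hd, e * y₁, mul_mem he hy₁, w, hw, ?_⟩
        simp [mul_assoc]
      | zero => simpa using Submodule.zero_mem _
      | add a b _ _ iha ihb => rw [add_mul]; exact Submodule.add_mem _ iha ihb
      | smul c a _ ih => rw [smul_mul_assoc]; exact Submodule.smul_mem _ _ ih
    · -- x₂ * y₂
      induction hx₂ using Submodule.span_induction with
      | mem a ha =>
        induction hy₂ using Submodule.span_induction with
        | mem b hb =>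
          obtain ⟨d₁, hd₁, e₁, he₁, w₁, hw₁, rfl⟩ := ha
          obtain ⟨d₂, hd₂, e₂, he₂, w₂, hw₂, rfl⟩ := hb
          have := mulw φ D B hφ1 (w₁.length + w₂.length) hi w₁ w₂ le_rfl hw₁.1 hw₂.1
            (mul_mem he₁ hd₂) hd₁ he₂
          have heq : d₁ * ((w₁.map Prod.snd).prod * e₁) * (d₂ * ((w₂.map Prod.snd).prod * e₂))
              = d₁ * ((w₁.map Prod.snd).prod * ((e₁ * d₂) * ((w₂.map Prod.snd).prod * e₂))) := by
            simp [mul_assoc]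
          rw [heq]; exact this
        | zero => simpa using Submodule.zero_mem _
        | add a b _ _ iha ihb => rw [mul_add]; exact Submodule.add_mem _ iha ihb
        | smul c a _ ih => rw [mul_smul_comm]; exact Submodule.smul_mem _ _ ih
      | zero => simpa using Submodule.zero_mem _
      | add a b _ _ iha ihb => rw [add_mul]; exact Submodule.add_mem _ iha ihb
      | smul c a _ ih => rw [smul_mul_assoc]; exact Submodule.smul_mem _ _ ih

lemma decompA (hφ1 : φ 1 = 1) {i : I1} (hi : i ≠ o) {a : A}
    (ha : a ∈ StarAlgebra.adjoin ℂ ((B i.1 : Set A) ∪ (D : Set A))) :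
    a ∈ Smod φ D B i := by
  have hstar : ((B i.1 : Set A) ∪ (D : Set A)) ∪ star ((B i.1 : Set A) ∪ (D : Set A))
      ⊆ ((B i.1 : Set A) ∪ (D : Set A)) := by
    rintro x (hx | hx)
    · exact hx
    · have hx' : star x ∈ ((B i.1 : Set A) ∪ (D : Set A)) := hx
      rcases hx' with h | h
      · exact Or.inl (by simpa [star_star] using star_mem (show star x ∈ B i.1 from h))
      · exact Or.inr (by simpa [star_star] using star_mem (show star x ∈ D from h))
  have ha' : a ∈ Algebra.adjoin ℂ ((B i.1 : Set A) ∪ (D : Set A)) := by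
    have h2 : a ∈ Algebra.adjoin ℂ
        (((B i.1 : Set A) ∪ (D : Set A)) ∪ star ((B i.1 : Set A) ∪ (D : Set A))) := ha
    exact Algebra.adjoin_mono hstar h2
  clear ha
  induction ha' using Algebra.adjoin_induction with
  | mem x hx =>
    rcases hx with hx | hx
    · -- x ∈ B i : center
      have : x = (x - φ x • 1) + φ x • 1 := by abel
      rw [this]
      refine Submodule.add_mem _ ?_ (memSmodD φ D B (SMulMemClass.smul_mem _ (one_mem _)))
      refine memSmodW φ D B ⟨1, one_mem D, 1, one_mem D, [(i, x - φ x • 1)],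
        ⟨⟨?_, List.isChain_singleton _⟩, by simp, by simp, by simp⟩, by simp⟩
      intro p hp
      rcases List.mem_singleton.1 hp with rfl
      exact Or.inl ⟨rfl, centB φ B hx, cent0 φ hφ1 x⟩
    · exact memSmodD φ D B hx
  | algebraMap r => exact memSmodD φ D B (algebraMap_mem D r)
  | add x y hx hy ihx ihy => exact Submodule.add_mem _ ihx ihy
  | mul x y hx hy ihx ihy => exact smodMul φ D B hφ1 hi ihx ihy

variable (ρ : A →ₗ[ℂ] A)

lemma phiRho (hρbim : ∀ d ∈ D, ∀ d' ∈ D, ∀ a : A, ρ (d * a * d') = d * ρ a * d')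
    (hφρ : ∀ a : A, φ (ρ a) = φ a)
    {d e : A} (hd : d ∈ D) (he : e ∈ D) (a : A) :
    φ (d * ρ a * e) = φ (d * a * e) := by
  rw [← hρbim d hd e he a, hφρ]

lemma rhoW (hφ1 : φ 1 = 1)
    (hGNS : ∀ d ∈ D, (∀ d' ∈ D, ∀ d'' ∈ D, φ (d' * d * d'') = 0) → d = 0)
    (hρD : ∀ a : A, ρ a ∈ D)
    (hρbim : ∀ d ∈ D, ∀ d' ∈ D, ∀ a : A, ρ (d * a * d') = d * ρ a * d')
    (hφρ : ∀ a : A, φ (ρ a) = φ a)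
    (hDB1 : (D : Set A) ⊆ (B 1 : Set A))
    (hfree : ∀ l : List (I1 × A),
      IsAltWord (fun n => {a : A | a ∈ B n.1 ∧ φ a = 0}) l →
      φ ((l.map Prod.snd).prod) = 0)
    {i : I1} (hi : i ≠ o) {a : A} (ha : a ∈ Wset φ D B i) : ρ a = 0 := by
  obtain ⟨d, hd, e, he, w, hw, rfl⟩ := ha
  refine hGNS _ (hρD _) ?_
  intro d' hd' d'' hd''
  rw [phiRho φ D ρ hρbim hφρ hd' hd'']
  have heq : d' * (d * ((w.map Prod.snd).prod * e)) * d''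
      = (d' * d) * ((w.map Prod.snd).prod * (e * d'')) := by simp [mul_assoc]
  rw [heq]
  exact flank φ D B hφ1 hDB1 hfree hi hw (mul_mem hd' hd) (mul_mem he hd'')

lemma rhoV (hφ1 : φ 1 = 1)
    (hGNS : ∀ d ∈ D, (∀ d' ∈ D, ∀ d'' ∈ D, φ (d' * d * d'') = 0) → d = 0)
    (hρD : ∀ a : A, ρ a ∈ D)
    (hρbim : ∀ d ∈ D, ∀ d' ∈ D, ∀ a : A, ρ (d * a * d') = d * ρ a * d')
    (hφρ : ∀ a : A, φ (ρ a) = φ a)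
    (hDB1 : (D : Set A) ⊆ (B 1 : Set A))
    (hfree : ∀ l : List (I1 × A),
      IsAltWord (fun n => {a : A | a ∈ B n.1 ∧ φ a = 0}) l →
      φ ((l.map Prod.snd).prod) = 0)
    {i : I1} (hi : i ≠ o) {a : A} (ha : a ∈ Submodule.span ℂ (Wset φ D B i)) : ρ a = 0 := by
  induction ha using Submodule.span_induction with
  | mem x hx => exact rhoW φ D B ρ hφ1 hGNS hρD hρbim hφρ hDB1 hfree hi hx
  | zero => simp
  | add x y _ _ ihx ihy => rw [map_add, ihx, ihy, add_zero]
  | smul c x _ ih => rw [map_smul, ih, smul_zero]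

lemma decompKer (hφ1 : φ 1 = 1)
    (hGNS : ∀ d ∈ D, (∀ d' ∈ D, ∀ d'' ∈ D, φ (d' * d * d'') = 0) → d = 0)
    (hρD : ∀ a : A, ρ a ∈ D)
    (hρid : ∀ d ∈ D, ρ d = d)
    (hρbim : ∀ d ∈ D, ∀ d' ∈ D, ∀ a : A, ρ (d * a * d') = d * ρ a * d')
    (hφρ : ∀ a : A, φ (ρ a) = φ a)
    (hDB1 : (D : Set A) ⊆ (B 1 : Set A))
    (hfree : ∀ l : List (I1 × A),
      IsAltWord (fun n => {a : A | a ∈ B n.1 ∧ φ a = 0}) l →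
      φ ((l.map Prod.snd).prod) = 0)
    {i : I1} (hi : i ≠ o) {a : A}
    (ha : a ∈ StarAlgebra.adjoin ℂ ((B i.1 : Set A) ∪ (D : Set A)))
    (hρa : ρ a = 0) : a ∈ Submodule.span ℂ (Wset φ D B i) := by
  have h := decompA φ D B hφ1 hi ha
  rcases Submodule.mem_sup.1 h with ⟨y, hy, z, hz, rfl⟩
  rw [Subalgebra.mem_toSubmodule, StarSubalgebra.mem_toSubalgebra] at hy
  have hρz : ρ z = 0 := rhoV φ D B ρ hφ1 hGNS hρD hρbim hφρ hDB1 hfree hi hz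
  have : y = 0 := by
    have := hρa
    rw [map_add, hρz, add_zero, hρid y hy] at this
    exact this
  rw [this, zero_add]
  exact hz

lemma mainG (hφ1 : φ 1 = 1)
    (hGNS : ∀ d ∈ D, (∀ d' ∈ D, ∀ d'' ∈ D, φ (d' * d * d'') = 0) → d = 0)
    (hρD : ∀ a : A, ρ a ∈ D)
    (hρid : ∀ d ∈ D, ρ d = d)
    (hρbim : ∀ d ∈ D, ∀ d' ∈ D, ∀ a : A, ρ (d * a * d') = d * ρ a * d')
    (hφρ : ∀ a : A, φ (ρ a) = φ a)
    (hDB1 : (D : Set A) ⊆ (B 1 : Set A))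
    (hfree : ∀ l : List (I1 × A),
      IsAltWord (fun n => {a : A | a ∈ B n.1 ∧ φ a = 0}) l →
      φ ((l.map Prod.snd).prod) = 0) :
    ∀ (l : List (I1 × A)),
      (∀ p ∈ l, p.2 ∈ StarAlgebra.adjoin ℂ ((B p.1.1 : Set A) ∪ (D : Set A)) ∧ ρ p.2 = 0) →
      l.Chain' (fun p q => p.1 ≠ q.1) →
      ∀ (w : List (I1 × A)) (z : A),
        (∀ p ∈ w, p.2 ∈ B p.1.1 ∧ φ p.2 = 0) →
        w.Chain' (fun p q => p.1 ≠ q.1) →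
        (∀ p, w.getLast? = some p → p.1 ≠ o) →
        ((z ∈ D ∧ (∀ p q, w.getLast? = some p → l.head? = some q → p.1 ≠ q.1) ∧
            (w = [] → l ≠ [])) ∨
          (z ∈ (B 1 : StarSubalgebra ℂ A) ∧ (∀ d' ∈ D, φ (z * d') = 0) ∧
            (∀ q, l.head? = some q → q.1 ≠ o))) →
        ∀ e, e ∈ D →
          φ ((w.map Prod.snd).prod * (z * ((l.map Prod.snd).prod * e))) = 0 := by
  intro l
  induction l with
  | nil =>
    intro _ _ w z hw hwch hwlast hpend e he
    simp only [List.map_nil, List.prod_nil, one_mul]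
    rcases hpend with ⟨hzD, _, hne⟩ | ⟨hzB, hzφ, _⟩
    · have hwne : w ≠ [] := fun h => (hne h) rfl
      rw [mulR φ ((w.map Prod.snd).prod) (z * e), map_add, map_smul]
      have h4 : φ ((w.map Prod.snd).prod) = 0 := altphi φ B hfree w hwne hw hwch
      have h3 : φ ((w.map Prod.snd).prod * (z * e - φ (z * e) • 1)) = 0 := by
        have := altphi φ B hfree (w ++ [(o, z * e - φ (z * e) • 1)]) (by simp)
          (by
            intro r hr
            rcases List.mem_append.1 hr with hr | hr
            · exact hw r hr
            · rcases List.mem_singleton.1 hr with rfl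
              exact ⟨centB φ B (hDB1 (mul_mem hzD he)), cent0 φ hφ1 _⟩)
          (by
            refine hwch.append (List.isChain_singleton _) ?_
            intro r hr y hy
            simp only [List.head?_cons, Option.mem_def, Option.some.injEq] at hy
            rw [← hy]
            exact hwlast r hr)
        simpa [List.map_append, List.prod_append] using this
      rw [h3, h4]
      simp
    · by_cases hwe : w = []
      · subst hwe
        simp only [List.map_nil, List.prod_nil, one_mul]
        exact hzφ e he
      · have := altphi φ B hfree (w ++ [(o, z * e)]) (by simp)
          (by
            intro r hr
            rcases List.mem_append.1 hr with hr | hr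
            · exact hw r hr
            · rcases List.mem_singleton.1 hr with rfl
              exact ⟨mul_mem hzB (hDB1 he), hzφ e he⟩)
          (by
            refine hwch.append (List.isChain_singleton _) ?_
            intro r hr y hy
            simp only [List.head?_cons, Option.mem_def, Option.some.injEq] at hy
            rw [← hy]
            exact hwlast r hr)
        simpa [List.map_append, List.prod_append] using this
  | cons p l' IH =>
    intro hl hch w z hw hwch hwlast hpend e he
    have hpA := (hl p (List.mem_cons_self (a := p) (l := l'))).1
    have hpρ := (hl p (List.mem_cons_self (a := p) (l := l'))).2
    have hl' : ∀ r ∈ l', r.2 ∈ StarAlgebra.adjoin ℂ ((B r.1.1 : Set A) ∪ (D : Set A)) ∧ ρ r.2 = 0 :=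
      fun r hr => hl r (List.mem_cons_of_mem _ hr)
    have hch' : l'.Chain' (fun p q => p.1 ≠ q.1) := hch.tail
    have hheadl' : ∀ y ∈ l'.head?, p.1 ≠ y.1 := (List.isChain_cons.1 hch).1
    by_cases hp1 : p.1 = o
    · -- index 1 letter : absorb into the pending element
      rcases hpend with ⟨hzD, hcond, hne⟩ | ⟨_, _, hq⟩
      swap
      · exact absurd hp1 (hq p rfl)
      have hp11 : p.1.1 = 1 := by rw [hp1]; rfl
      rw [hp11] at hpA
      have hpB1 : p.2 ∈ (B 1 : StarSubalgebra ℂ A) :=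
        StarAlgebra.adjoin_le (Set.union_subset (fun x hx => hx) hDB1) hpA
      have hres := IH hl' hch' w (z * p.2) hw hwch hwlast
        (Or.inr ⟨mul_mem (hDB1 hzD) hpB1,
          (by
            intro d' hd'
            have h0 := hρbim z hzD d' hd' p.2
            rw [hpρ, mul_zero, zero_mul] at h0
            rw [← hφρ (z * p.2 * d'), h0, map_zero]),
          (by
            intro q hq'
            have := hheadl' q hq'
            rw [hp1] at this
            exact fun hcon => this hcon.symm)⟩) e he
      simpa only [List.map_cons, List.prod_cons, mul_assoc] using hres
    · -- index ≠ 1 letter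
      have hmem : p.2 ∈ Submodule.span ℂ (Wset φ D B p.1) :=
        decompKer φ D B ρ hφ1 hGNS hρD hρid hρbim hφρ hDB1 hfree hp1 hpA hpρ
      simp only [List.map_cons, List.prod_cons, mul_assoc]
      generalize hgen : p.2 = a at hmem ⊢
      clear hgen hpA hpρ
      induction hmem using Submodule.span_induction with
      | zero => simp
      | add a b _ _ iha ihb => simp only [add_mul, mul_add, map_add, iha, ihb, add_zero]
      | smul c a _ ih =>
        simp only [smul_mul_assoc, mul_smul_comm, map_smul, ih, smul_eq_mul, mul_zero]
      | mem a ha =>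
        obtain ⟨d₁, hd₁, e₁, he₁, x, hx, rfl⟩ := ha
        obtain ⟨hxNW, hxne, hxhead, hxlast⟩ := hx
        have hxlet : ∀ r ∈ x, r.2 ∈ B r.1.1 ∧ φ r.2 = 0 := nwLetters φ D B hDB1 hxNW
        simp only [mul_assoc]
        -- goal : φ (Pw * (z * (d₁ * (Px * (e₁ * (Pl' * e)))))) = 0
        -- common invariants for words of the form  w ++ (o, c) :: x
        have hWlet : ∀ (c : A), c ∈ (B 1 : StarSubalgebra ℂ A) → φ c = 0 →
            ∀ r ∈ w ++ (o, c) :: x, r.2 ∈ B r.1.1 ∧ φ r.2 = 0 := by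
          intro c hc1 hc2 r hr
          rcases List.mem_append.1 hr with hr | hr
          · exact hw r hr
          rcases List.mem_cons.1 hr with rfl | hr
          · exact ⟨hc1, hc2⟩
          · exact hxlet r hr
        have hWch : ∀ (c : A), (w ++ (o, c) :: x).Chain' (fun p q => p.1 ≠ q.1) := by
          intro c
          refine hwch.append (List.isChain_cons.2 ⟨?_, hxNW.2⟩) ?_
          · intro y hy
            rw [Option.mem_def] at hy
            have := hxhead y hy
            rw [this]
            exact fun hcon => hp1 hcon.symm
          · intro r hr y hy
            simp only [List.head?_cons, Option.mem_def, Option.some.injEq] at hy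
            rw [← hy]
            exact hwlast r hr
        have hWlast : ∀ (c : A) (r : I1 × A), (w ++ (o, c) :: x).getLast? = some r → r.1 = p.1 := by
          intro c r hr
          rw [show w ++ (o, c) :: x = (w ++ [(o, c)]) ++ x by simp] at hr
          rw [List.getLast?_append_of_ne_nil _ hxne] at hr
          exact hxlast r hr
        have hWcond : ∀ (c : A) (r q : I1 × A), (w ++ (o, c) :: x).getLast? = some r →
            l'.head? = some q → r.1 ≠ q.1 := by
          intro c r q hr hq'
          rw [hWlast c r hr]
          exact hheadl' q hq'
        rcases hpend with ⟨hzD, hcond, hne⟩ | ⟨hzB, hzφ, _⟩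
        · -- pending element is in D : center z * d₁
          rw [show z * (d₁ * ((x.map Prod.snd).prod * (e₁ * ((l'.map Prod.snd).prod * e))))
              = (z * d₁) * ((x.map Prod.snd).prod * (e₁ * ((l'.map Prod.snd).prod * e)))
            from by rw [mul_assoc]]
          rw [mulL φ (z * d₁) ((x.map Prod.snd).prod * (e₁ * ((l'.map Prod.snd).prod * e)))]
          rw [mul_add, mul_smul_comm, map_add, map_smul]
          have hc1 : z * d₁ - φ (z * d₁) • 1 ∈ (B 1 : StarSubalgebra ℂ A) :=
            centB φ B (hDB1 (mul_mem hzD hd₁))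
          have hT1 := IH hl' hch' (w ++ (o, z * d₁ - φ (z * d₁) • 1) :: x) e₁
            (hWlet _ hc1 (cent0 φ hφ1 _)) (hWch _)
            (fun r hr => (hWlast _ r hr) ▸ hp1)
            (Or.inl ⟨he₁, hWcond _, fun h => absurd h (by simp)⟩) e he
          have hT2 := IH hl' hch' (w ++ x) e₁
            (by
              intro r hr
              rcases List.mem_append.1 hr with hr | hr
              · exact hw r hr
              · exact hxlet r hr)
            (by
              refine hwch.append hxNW.2 ?_
              intro r hr y hy
              rw [Option.mem_def] at hr hy
              have := hxhead y hy
              rw [this]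
              exact hcond r p hr rfl)
            (by
              intro r hr
              rw [List.getLast?_append_of_ne_nil _ hxne] at hr
              exact (hxlast r hr) ▸ hp1)
            (Or.inl ⟨he₁,
              (by
                intro r q hr hq'
                rw [List.getLast?_append_of_ne_nil _ hxne] at hr
                rw [hxlast r hr]
                exact hheadl' q hq'),
              (fun h => absurd h (by simp [hxne]))⟩) e he
          simp only [List.map_append, List.map_cons, List.prod_append, List.prod_cons,
            mul_assoc] at hT1 hT2
          rw [hT1, hT2]
          simp
        · -- pending element is a centered B₁ element : it becomes a letter
          rw [show z * (d₁ * ((x.map Prod.snd).prod * (e₁ * ((l'.map Prod.snd).prod * e))))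
              = (z * d₁) * ((x.map Prod.snd).prod * (e₁ * ((l'.map Prod.snd).prod * e)))
            from by rw [mul_assoc]]
          have hT := IH hl' hch' (w ++ (o, z * d₁) :: x) e₁
            (hWlet _ (mul_mem hzB (hDB1 hd₁)) (hzφ d₁ hd₁)) (hWch _)
            (fun r hr => (hWlast _ r hr) ▸ hp1)
            (Or.inl ⟨he₁, hWcond _, fun h => absurd h (by simp)⟩) e he
          simpa only [List.map_append, List.map_cons, List.prod_append, List.prod_cons,
            mul_assoc] using hT

end Stmt4Aux

/-- Freeness over D lemma: with φ a state with φ∘ρ = φ, ρ a conditional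
expectation onto D ⊆ B₁ whose restriction φ|_D has faithful GNS representation,
and (B_n)_{n≥1} free with respect to φ, the family of *-algebras
(A_n)_{n≥1}, A_n generated by B_n ∪ D, is free over D with respect to ρ: every
alternating product of elements of A_{i₁} ∩ ker ρ, …, A_{i_q} ∩ ker ρ with
distinct consecutive indices lies in ker ρ. -/
theorem stmt4 {A : Type*} [Ring A] [Algebra ℂ A] [StarRing A] [StarModule ℂ A]
    (φ : A →ₗ[ℂ] ℂ) (hφ1 : φ 1 = 1)
    (D : StarSubalgebra ℂ A)
    (hGNS : ∀ d ∈ D, (∀ d' ∈ D, ∀ d'' ∈ D, φ (d' * d * d'') = 0) → d = 0)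
    (ρ : A →ₗ[ℂ] A)
    (hρD : ∀ a : A, ρ a ∈ D)
    (hρid : ∀ d ∈ D, ρ d = d)
    (hρbim : ∀ d ∈ D, ∀ d' ∈ D, ∀ a : A, ρ (d * a * d') = d * ρ a * d')
    (hφρ : ∀ a : A, φ (ρ a) = φ a)
    (B : ℕ → StarSubalgebra ℂ A)
    (hDB1 : (D : Set A) ⊆ (B 1 : Set A))
    (hfree : ∀ l : List ({n : ℕ // 1 ≤ n} × A),
      IsAltWord (fun n => {a : A | a ∈ B n.1 ∧ φ a = 0}) l →
      φ ((l.map Prod.snd).prod) = 0) :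
    ∀ l : List ({n : ℕ // 1 ≤ n} × A),
      IsAltWord (fun n =>
        ((StarAlgebra.adjoin ℂ ((B n.1 : Set A) ∪ (D : Set A)) : StarSubalgebra ℂ A) : Set A)
          ∩ {a : A | ρ a = 0}) l →
      ρ ((l.map Prod.snd).prod) = 0 := by
  intro l hl
  obtain ⟨hlne, hlmem, hlch⟩ := hl
  refine hGNS _ (hρD _) ?_
  intro d' hd' d'' hd''
  rw [Stmt4Aux.phiRho φ D ρ hρbim hφρ hd' hd'']
  have h2 := Stmt4Aux.mainG φ D B ρ hφ1 hGNS hρD hρid hρbim hφρ hDB1 hfree l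
    (fun p hp => ⟨(hlmem p hp).1, (hlmem p hp).2⟩) hlch [] d' (by intro p hp; simp at hp)
    List.isChain_nil (by intro p h; simp at h)
    (Or.inl ⟨hd', by intro p q h; simp at h, fun _ => hlne⟩) d'' hd''
  simpa [mul_assoc] using h2
end

section
/- Let δ₀ be a function on finite subsets of a II₁ factor satisfying: monotonicity δ₀(S) ≤ δ₀(S ∪ T), the hyperfinite inequality δ₀(S ∪ {x} ∪ E) ≤ δ₀(S ∪ E) + δ₀({x} ∪ E) − δ₀(E) whenever E generates a hyperfinite algebra containing relevant elements, invariance δ₀(S ∪ E) = δ₀(S) whenever E ⊆ S'' is a partition of unity, and the approximation property that for each self-adjoint x and ε > 0 there exist projections e₁,...,e_n ∈ {x}'' of equal trace with δ₀(e₁,...,e_n) > δ₀(x) − ε and δ₀({x} ∪ {e₁,...,e_n}) = δ₀(x). Then δ₀(S ∪ {x}) = δ₀(S) for every self-adjoint x ∈ S''. -/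
/-- Abstract version of the invariance argument: if δ₀ (on finite subsets of a
II₁ factor M) is monotone, satisfies the hyperfinite inequality, is unchanged by
adjoining a partition of unity lying in S'', and satisfies the approximation
property by equal-trace projections in {x}'', then δ₀(S ∪ {x}) = δ₀(S) for every
self-adjoint x ∈ S''. -/
theorem stmt8 {M : Type*} [DecidableEq M]
    (δ : Finset M → ℝ)
    (gen : Set M → Set M)                 -- S ↦ S'' (generated von Neumann algebra)
    (IsSelfAdjoint' : M → Prop)
    (Hyperfinite : Finset M → Prop)       -- E generates a hyperfinite algebra
    (PartitionOfUnity : Finset M → Prop)  -- E is a partition of unity by projections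
    (hmono : ∀ S T : Finset M, δ S ≤ δ (S ∪ T))
    (hhyp : ∀ (S E : Finset M) (x : M), Hyperfinite E →
      δ (S ∪ {x} ∪ E) ≤ δ (S ∪ E) + δ ({x} ∪ E) - δ E)
    (hinv : ∀ S E : Finset M, (E : Set M) ⊆ gen (S : Set M) → PartitionOfUnity E →
      δ (S ∪ E) = δ S)
    (hgen : ∀ (S : Set M) (x : M), x ∈ gen S → gen {x} ⊆ gen S)
    (happrox : ∀ x : M, IsSelfAdjoint' x → ∀ ε : ℝ, 0 < ε → ∃ E : Finset M,
      (E : Set M) ⊆ gen {x} ∧ PartitionOfUnity E ∧ Hyperfinite E ∧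
      δ {x} - ε < δ E ∧ δ ({x} ∪ E) = δ {x})
    (S : Finset M) (x : M) (hx : IsSelfAdjoint' x) (hxS : x ∈ gen (S : Set M)) :
    δ (S ∪ {x}) = δ S := by
  refine le_antisymm ?_ (hmono S {x})
  refine le_of_forall_pos_le_add fun ε hε => ?_
  obtain ⟨E, hE1, hE2, hE3, hE4, hE5⟩ := happrox x hx ε hε
  have hEx : δ ({x} ∪ E) = δ {x} := by
    have := hinv {x} E (by simpa using hE1) hE2
    simpa using this
  have hES : δ (S ∪ E) = δ S :=
    hinv S E (fun y hy => hgen _ x hxS (by simpa using hE1 hy)) hE2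
  have h1 : δ (S ∪ {x}) ≤ δ (S ∪ {x} ∪ E) := hmono _ _
  have h2 := hhyp S E x hE3
  rw [hES, hEx] at h2
  linarith
end

section
/- Let G = G₁ *_{G₀} G₂ be an amalgamated free product of groups over a common subgroup G₀ with b₁^{(2)}(G₀) = 0. Assume Additivity of the von Neumann dimension and the long exact Mayer–Vietoris sequence in L²-homology associated to the G-pushout of classifying spaces. Then b₁^{(2)}(G) = b₁^{(2)}(G₁) + b₁^{(2)}(G₂) + |G₀|⁻¹ − |G₁|⁻¹ − |G₂|⁻¹ + |G|⁻¹. -/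
open scoped ENNReal

/-- Lück's formula for the first L²-Betti number of an amalgamated free product
G = G₁ *_{G₀} G₂ with b₁⁽²⁾(G₀) = 0, formalized at the level of the six-term exact
Mayer–Vietoris sequence of N(G)-modules, with an additive dimension function.
The conclusion b₁(G) + |G₁|⁻¹ + |G₂|⁻¹ = b₁(G₁) + b₁(G₂) + |G₀|⁻¹ + |G|⁻¹ is the
additive form of b₁(G) = b₁(G₁) + b₁(G₂) + |G₀|⁻¹ − |G₁|⁻¹ − |G₂|⁻¹ + |G|⁻¹. -/
theorem stmt9 {R : Type} [Ring R]
    (dim : ∀ (M : Type) [AddCommGroup M] [Module R M], ℝ≥0∞)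
    (hadd : ∀ (M₀ M₁ M₂ : Type) [AddCommGroup M₀] [Module R M₀]
      [AddCommGroup M₁] [Module R M₁] [AddCommGroup M₂] [Module R M₂]
      (f : M₀ →ₗ[R] M₁) (g : M₁ →ₗ[R] M₂),
      Function.Injective f → Function.Surjective g →
      LinearMap.range f = LinearMap.ker g → dim M₁ = dim M₀ + dim M₂)
    (A₁ A₂ A₃ A₄ A₅ A₆ : Type)
    [AddCommGroup A₁] [Module R A₁] [AddCommGroup A₂] [Module R A₂]
    [AddCommGroup A₃] [Module R A₃] [AddCommGroup A₄] [Module R A₄]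
    [AddCommGroup A₅] [Module R A₅] [AddCommGroup A₆] [Module R A₆]
    (f₁ : A₁ →ₗ[R] A₂) (f₂ : A₂ →ₗ[R] A₃) (f₃ : A₃ →ₗ[R] A₄)
    (f₄ : A₄ →ₗ[R] A₅) (f₅ : A₅ →ₗ[R] A₆)
    (hex₂ : LinearMap.range f₁ = LinearMap.ker f₂)
    (hex₃ : LinearMap.range f₂ = LinearMap.ker f₃)
    (hex₄ : LinearMap.range f₃ = LinearMap.ker f₄)
    (hex₅ : LinearMap.range f₄ = LinearMap.ker f₅)
    (hsurj : Function.Surjective f₅)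
    (b1G0 b1G1 b1G2 b1G i0 i1 i2 iG : ℝ≥0∞)
    (h1 : dim A₁ = b1G0)          -- b₁⁽²⁾(G₀)
    (h2 : dim A₂ = b1G1 + b1G2)   -- b₁⁽²⁾(G₁) ⊕ b₁⁽²⁾(G₂)
    (h3 : dim A₃ = b1G)           -- b₁⁽²⁾(G)
    (h4 : dim A₄ = i0)            -- |G₀|⁻¹ = b₀⁽²⁾(G₀)
    (h5 : dim A₅ = i1 + i2)       -- |G₁|⁻¹ + |G₂|⁻¹
    (h6 : dim A₆ = iG)            -- |G|⁻¹
    (hG0 : b1G0 = 0)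
    (hi0 : i0 ≠ ⊤) (hi1 : i1 ≠ ⊤) (hi2 : i2 ≠ ⊤) (hiG : iG ≠ ⊤) :
    b1G + i1 + i2 = b1G1 + b1G2 + i0 + iG := by
  have key : ∀ (M N : Type) [AddCommGroup M] [Module R M] [AddCommGroup N] [Module R N]
      (f : M →ₗ[R] N), dim M = dim (LinearMap.ker f) + dim (LinearMap.range f) := by
    intro M N _ _ _ _ f
    exact hadd _ _ _ (LinearMap.ker f).subtype f.rangeRestrict
      (Submodule.injective_subtype _) f.surjective_rangeRestrict
      (by rw [Submodule.range_subtype, LinearMap.ker_rangeRestrict])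
  have hr1 : dim (LinearMap.range f₁) = 0 := by
    have h := key _ _ f₁
    rw [h1, hG0] at h
    exact (add_eq_zero.mp h.symm).2
  have hk2 : dim (LinearMap.ker f₂) = 0 := by rw [← hex₂]; exact hr1
  have e2 := key _ _ f₂
  have e3 := key _ _ f₃
  have e4 := key _ _ f₄
  have e5 : dim A₅ = dim (LinearMap.ker f₅) + dim A₆ :=
    hadd _ _ _ (LinearMap.ker f₅).subtype f₅ (Submodule.injective_subtype _) hsurj
      (Submodule.range_subtype _)
  rw [h2, hk2, zero_add] at e2
  rw [h3, ← hex₃] at e3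
  rw [h4, ← hex₄] at e4
  rw [h5, h6, ← hex₅] at e5
  rw [e3, e2, e4, add_assoc _ i1 i2, e5]
  ring
end
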